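/- Fix m ∈ ℕ, v_s ∈ ℝ and α ∈ (0,1). Let v_r be the unique real number with Φ̄(v_r) = α Φ̄(v_s), and set C := φ(v_s)/φ(v_r). Then there exists K > 0, depending only on α and v_s, with the following property: for all bounded measurable functions g, s : ℝ^m → ℝ with ‖g‖_∞ + ‖s‖_∞ ≤ 1, define h(θ) := E[g(U_θ)] where U_θ has law N(θ, I_m), define S := {(u,v) ∈ ℝ^m × ℝ : v > v_s − s(u)}, and define the selective p-value p(u,v) := Φ̄(v + g(u)) / Φ̄(v_s − s(u) + g(u)). Then for every θ ∈ ℝ^m, with Y distributed N((θ, −h(θ)), I_{m+1}): |P(p(Y) < α) − α · P(Y ∈ S)| ≤ K (‖g‖_∞ + ‖s‖_∞)². That is, the test rejecting when the selective p-value is below α has selective rejection probability α along the boundary of the hypothesis region, up to an error quadratic in the magnitude of the surfaces. -/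

import Mathlib

/-!
Conditionally on `U = u`, the coordinate `V + h(θ)` is standard normal, so both probabilities are
Gaussian averages over `u` of `Φ̄` at the respective thresholds. Put `x = g(u) - s(u)` and
`y = h(θ) - g(u)`. The test rejects iff `V > v_r(x) - g(u)`, where `Φ̄(v_r(x)) = α Φ̄(v_s + x)`, so
the difference of the two probabilities is the average of `Φ̄(v_r(x) + y) - α Φ̄(v_s + x + y)`.
This vanishes at `y = 0`, and its first-order part in `y` is `(φ(v_r(0)) - α φ(v_s)) y` up to
`O(|x| |y|)`, because `v_r` is locally Lipschitz. Since `h(θ) = E g(U)`, the variable `y` has mean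
zero, which leaves an error of order `(|x| + |y|)² ≤ 9 (‖g‖_∞ + ‖s‖_∞)²`.
-/

open MeasureTheory ProbabilityTheory Set
open scoped NNReal

/-- The standard normal density. -/
noncomputable def stdphi (t : ℝ) : ℝ :=
  (Real.sqrt (2 * Real.pi))⁻¹ * Real.exp (-t ^ 2 / 2)

/-- The standard normal upper-tail probability Φ̄. -/
noncomputable def Phibar (x : ℝ) : ℝ := ∫ t in Set.Ioi x, stdphi t

/-- The Gaussian measure `N(μ, σ² I_m)` on `ℝ^m` as a product of one-dimensional
Gaussian measures. -/
noncomputable def gaussianPi {m : ℕ} (μ : Fin m → ℝ) (v : ℝ≥0) :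
    Measure (Fin m → ℝ) :=
  Measure.pi fun i => gaussianReal (μ i) v

open Filter Topology

lemma stdphi_eq_gaussianPDFReal : stdphi = gaussianPDFReal 0 1 := by
  ext t
  simp [stdphi, gaussianPDFReal]

lemma stdphi_pos (t : ℝ) : 0 < stdphi t :=
  stdphi_eq_gaussianPDFReal ▸ gaussianPDFReal_pos 0 1 t one_ne_zero

lemma integrable_stdphi : Integrable stdphi :=
  stdphi_eq_gaussianPDFReal ▸ integrable_gaussianPDFReal 0 1

lemma integral_stdphi : ∫ t, stdphi t = 1 :=
  stdphi_eq_gaussianPDFReal ▸ integral_gaussianPDFReal_eq_one 0 one_ne_zero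

lemma continuous_stdphi : Continuous stdphi := by
  unfold stdphi
  fun_prop

lemma stdphi_le_exp (t : ℝ) : stdphi t ≤ Real.exp (-t ^ 2 / 2) := by
  have h : (Real.sqrt (2 * Real.pi))⁻¹ ≤ 1 :=
    inv_le_one_of_one_le₀ (Real.one_le_sqrt.2 (by nlinarith [Real.pi_gt_three]))
  exact mul_le_of_le_one_left (Real.exp_pos _).le h

lemma stdphi_le_one (t : ℝ) : stdphi t ≤ 1 :=
  (stdphi_le_exp t).trans (Real.exp_le_one_iff.2 (by nlinarith [sq_nonneg t]))

lemma abs_mul_stdphi_le_one (t : ℝ) : |t * stdphi t| ≤ 1 := by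
  have ht : |t| ≤ Real.exp (t ^ 2 / 2) := by
    nlinarith [Real.add_one_le_exp (t ^ 2 / 2), sq_nonneg (|t| - 1), sq_abs t]
  rw [abs_mul, abs_of_pos (stdphi_pos t)]
  calc |t| * stdphi t ≤ Real.exp (t ^ 2 / 2) * Real.exp (-t ^ 2 / 2) :=
        mul_le_mul ht (stdphi_le_exp t) (stdphi_pos t).le (Real.exp_pos _).le
    _ = 1 := by rw [← Real.exp_add, ← Real.exp_zero]; ring_nf

lemma hasDerivAt_stdphi (t : ℝ) : HasDerivAt stdphi (-(t * stdphi t)) t := by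
  have h : HasDerivAt (fun u : ℝ => -u ^ 2 / 2) (-t) t := by
    simpa using ((hasDerivAt_pow 2 t).neg.div_const 2).congr_deriv (by ring)
  refine (h.exp.const_mul (Real.sqrt (2 * Real.pi))⁻¹).congr_deriv ?_
  unfold stdphi
  ring

lemma lipschitzWith_one_stdphi : LipschitzWith 1 stdphi :=
  lipschitzWith_of_nnnorm_deriv_le (fun t => (hasDerivAt_stdphi t).differentiableAt) fun t => by
    rw [(hasDerivAt_stdphi t).deriv, ← NNReal.coe_le_coe, coe_nnnorm, Real.norm_eq_abs, abs_neg]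
    exact abs_mul_stdphi_le_one t

lemma abs_stdphi_sub_stdphi_le (a b : ℝ) : |stdphi a - stdphi b| ≤ |a - b| := by
  simpa [Real.dist_eq] using lipschitzWith_one_stdphi.dist_le_mul a b

lemma Phibar_sub_Phibar (a b : ℝ) : Phibar a - Phibar b = ∫ t in a..b, stdphi t :=
  intervalIntegral.integral_Ioi_sub_Ioi' integrable_stdphi.integrableOn
    integrable_stdphi.integrableOn

lemma hasDerivAt_Phibar (x : ℝ) : HasDerivAt Phibar (-stdphi x) x := by
  have h : Phibar = fun x => Phibar 0 - ∫ t in (0 : ℝ)..x, stdphi t := by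
    ext x
    rw [← Phibar_sub_Phibar]
    ring
  rw [h]
  exact ((continuous_stdphi.integral_hasStrictDerivAt 0 x).hasDerivAt).const_sub _

lemma differentiable_Phibar : Differentiable ℝ Phibar :=
  fun x => (hasDerivAt_Phibar x).differentiableAt

lemma continuous_Phibar : Continuous Phibar := differentiable_Phibar.continuous

lemma strictAnti_Phibar : StrictAnti Phibar :=
  strictAnti_of_deriv_neg fun x => by
    rw [(hasDerivAt_Phibar x).deriv, neg_lt_zero]
    exact stdphi_pos x

lemma lipschitzWith_one_Phibar : LipschitzWith 1 Phibar :=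
  lipschitzWith_of_nnnorm_deriv_le differentiable_Phibar fun x => by
    rw [(hasDerivAt_Phibar x).deriv, ← NNReal.coe_le_coe, coe_nnnorm, Real.norm_eq_abs, abs_neg,
      abs_of_pos (stdphi_pos x)]
    exact stdphi_le_one x

lemma abs_Phibar_add_sub_Phibar_add_stdphi_mul_le (a y : ℝ) :
    |Phibar (a + y) - Phibar a + stdphi a * y| ≤ y ^ 2 := by
  have hderiv : ∀ t ∈ uIcc 0 y, HasDerivWithinAt (fun t => Phibar (a + t) + stdphi a * t)
      (stdphi a - stdphi (a + t)) (uIcc 0 y) t := fun t _ => by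
    have := ((hasDerivAt_Phibar (a + t)).comp t ((hasDerivAt_id t).const_add a)).add
      ((hasDerivAt_id t).const_mul (stdphi a))
    exact (this.congr_deriv (by ring)).hasDerivWithinAt
  have hbound : ∀ t ∈ uIcc 0 y, ‖stdphi a - stdphi (a + t)‖ ≤ |y| := fun t ht => by
    rw [Real.norm_eq_abs]
    calc |stdphi a - stdphi (a + t)| ≤ |a - (a + t)| := abs_stdphi_sub_stdphi_le _ _
      _ = |t - 0| := by rw [sub_zero, sub_add_cancel_left, abs_neg]
      _ ≤ |y - 0| := abs_sub_left_of_mem_uIcc ht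
      _ = |y| := by rw [sub_zero]
  have := (convex_uIcc 0 y).norm_image_sub_le_of_norm_hasDerivWithin_le hderiv hbound
    left_mem_uIcc right_mem_uIcc
  rw [Real.norm_eq_abs, Real.norm_eq_abs, sub_zero, ← abs_mul, ← sq, abs_sq] at this
  convert this using 2
  rw [add_zero, mul_zero, add_zero]
  ring

lemma tendsto_Phibar_atTop : Tendsto Phibar atTop (𝓝 0) := by
  have h := intervalIntegral_tendsto_integral_Ioi 0 integrable_stdphi.integrableOn tendsto_id
  have h' : Tendsto (fun x => Phibar 0 - ∫ t in (0 : ℝ)..x, stdphi t) atTop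
      (𝓝 (Phibar 0 - Phibar 0)) := h.const_sub _
  rw [sub_self] at h'
  refine h'.congr fun x => ?_
  rw [← Phibar_sub_Phibar]
  ring

lemma tendsto_Phibar_atBot : Tendsto Phibar atBot (𝓝 1) := by
  have h := (aecover_Ioi tendsto_id).integral_tendsto_of_countably_generated integrable_stdphi
  rw [integral_stdphi] at h
  exact h

lemma Phibar_pos (x : ℝ) : 0 < Phibar x :=
  (strictAnti_Phibar.antitone.le_of_tendsto tendsto_Phibar_atTop (x + 1)).trans_lt
    (strictAnti_Phibar (lt_add_one x))

lemma Phibar_lt_one (x : ℝ) : Phibar x < 1 :=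
  (strictAnti_Phibar (sub_one_lt x)).trans_le
    (strictAnti_Phibar.antitone.ge_of_tendsto tendsto_Phibar_atBot (x - 1))

lemma exists_Phibar_eq {p : ℝ} (hp : p ∈ Ioo 0 1) : ∃ x, Phibar x = p :=
  mem_range_of_exists_le_of_exists_ge continuous_Phibar
    (tendsto_Phibar_atTop.eventually (ge_mem_nhds hp.1)).exists
    (tendsto_Phibar_atBot.eventually (le_mem_nhds hp.2)).exists

/-- `critVal α v_s` is the paper's `v_r`, the solution of `Φ̄(v_r) = α Φ̄(v_s)` when `0 < α ≤ 1`. -/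
noncomputable def critVal (α v : ℝ) : ℝ := Function.invFun Phibar (α * Phibar v)

lemma Phibar_critVal {α : ℝ} (hα₀ : 0 < α) (hα₁ : α ≤ 1) (v : ℝ) :
    Phibar (critVal α v) = α * Phibar v :=
  Function.invFun_eq <| exists_Phibar_eq
    ⟨mul_pos hα₀ (Phibar_pos v), (mul_le_of_le_one_left (Phibar_pos v).le hα₁).trans_lt
      (Phibar_lt_one v)⟩

lemma monotone_critVal {α : ℝ} (hα₀ : 0 < α) (hα₁ : α ≤ 1) : Monotone (critVal α) :=
    fun v w hvw => by
  rw [← strictAnti_Phibar.le_iff_ge, Phibar_critVal hα₀ hα₁, Phibar_critVal hα₀ hα₁]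
  exact mul_le_mul_of_nonneg_left (strictAnti_Phibar.antitone hvw) hα₀.le

lemma Phibar_div_Phibar_lt_iff {α t v : ℝ} (hα₀ : 0 < α) (hα₁ : α ≤ 1) :
    Phibar t / Phibar v < α ↔ critVal α v < t := by
  rw [div_lt_iff₀ (Phibar_pos v), ← Phibar_critVal hα₀ hα₁, strictAnti_Phibar.lt_iff_gt]

lemma mul_abs_sub_le_abs_Phibar_sub {A B m a b : ℝ} (hm : ∀ t ∈ Icc A B, m ≤ stdphi t)
    (ha : a ∈ Icc A B) (hb : b ∈ Icc A B) : m * |a - b| ≤ |Phibar a - Phibar b| := by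
  wlog hab : a ≤ b generalizing a b
  · rw [abs_sub_comm a, abs_sub_comm (Phibar a)]
    exact this hb ha (le_of_not_ge hab)
  have hint : m * (b - a) ≤ ∫ t in a..b, stdphi t := by
    have := intervalIntegral.integral_mono_on hab (intervalIntegrable_const (μ := volume))
      (continuous_stdphi.intervalIntegrable a b)
      fun t ht => hm t ⟨ha.1.trans ht.1, ht.2.trans hb.2⟩
    rwa [intervalIntegral.integral_const, smul_eq_mul, mul_comm] at this
  rw [abs_sub_comm, abs_of_nonneg (sub_nonneg.2 hab), Phibar_sub_Phibar]
  exact hint.trans (le_abs_self _)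

lemma exists_abs_critVal_add_sub_le {α : ℝ} (hα₀ : 0 < α) (hα₁ : α ≤ 1) (v : ℝ) :
    ∃ L, 0 ≤ L ∧ ∀ x, |x| ≤ 1 → |critVal α (v + x) - critVal α v| ≤ L * |x| := by
  have hmono := monotone_critVal hα₀ hα₁
  have hmem : ∀ x, |x| ≤ 1 → critVal α (v + x) ∈ Icc (critVal α (v - 1)) (critVal α (v + 1)) :=
    fun x hx => ⟨hmono (by linarith [neg_abs_le x]), hmono (by linarith [le_abs_self x])⟩
  obtain ⟨t₀, -, ht₀⟩ := isCompact_Icc.exists_isMinOn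
    (nonempty_Icc.2 (hmono (by linarith : v - 1 ≤ v + 1))) continuous_stdphi.continuousOn
  refine ⟨α / stdphi t₀, div_nonneg hα₀.le (stdphi_pos t₀).le, fun x hx => ?_⟩
  rw [div_mul_eq_mul_div, le_div_iff₀ (stdphi_pos t₀), mul_comm]
  calc stdphi t₀ * |critVal α (v + x) - critVal α v|
      ≤ |Phibar (critVal α (v + x)) - Phibar (critVal α v)| :=
        mul_abs_sub_le_abs_Phibar_sub (fun t ht => ht₀ ht) (hmem x hx)
          (by simpa using hmem 0 (by simp))
    _ = α * |Phibar (v + x) - Phibar v| := by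
        rw [Phibar_critVal hα₀ hα₁, Phibar_critVal hα₀ hα₁, ← mul_sub, abs_mul, abs_of_pos hα₀]
    _ ≤ α * |x| :=
        mul_le_mul_of_nonneg_left
          (by simpa [Real.dist_eq] using lipschitzWith_one_Phibar.dist_le_mul (v + x) v) hα₀.le

lemma abs_Phibar_add_sub_mul_Phibar_add_le {α a b a' b' : ℝ} (hα : 0 ≤ α)
    (hab : Phibar a = α * Phibar b) (y : ℝ) :
    |Phibar (a + y) - α * Phibar (b + y) + (stdphi a' - α * stdphi b') * y|
      ≤ (1 + α) * y ^ 2 + (|a - a'| + α * |b - b'|) * |y| := by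
  have key : Phibar (a + y) - α * Phibar (b + y) + (stdphi a' - α * stdphi b') * y
      = (Phibar (a + y) - Phibar a + stdphi a * y)
        - α * (Phibar (b + y) - Phibar b + stdphi b * y)
        + (stdphi a' - stdphi a) * y - α * ((stdphi b' - stdphi b) * y) := by
    rw [hab]; ring
  have h₁ := abs_Phibar_add_sub_Phibar_add_stdphi_mul_le a y
  have h₂ : |α * (Phibar (b + y) - Phibar b + stdphi b * y)| ≤ α * y ^ 2 := by
    rw [abs_mul, abs_of_nonneg hα]
    exact mul_le_mul_of_nonneg_left (abs_Phibar_add_sub_Phibar_add_stdphi_mul_le b y) hα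
  have h₃ : |(stdphi a' - stdphi a) * y| ≤ |a - a'| * |y| := by
    rw [abs_mul, abs_sub_comm a]
    exact mul_le_mul_of_nonneg_right (abs_stdphi_sub_stdphi_le a' a) (abs_nonneg y)
  have h₄ : |α * ((stdphi b' - stdphi b) * y)| ≤ α * (|b - b'| * |y|) := by
    rw [abs_mul, abs_mul, abs_of_nonneg hα, abs_sub_comm b]
    exact mul_le_mul_of_nonneg_left
      (mul_le_mul_of_nonneg_right (abs_stdphi_sub_stdphi_le b' b) (abs_nonneg y)) hα
  rw [key, abs_le]
  rw [abs_le] at h₁ h₂ h₃ h₄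
  constructor <;> linarith

lemma abs_Phibar_critVal_add_sub_le {α v L x : ℝ} (hα₀ : 0 < α) (hα₁ : α ≤ 1) (hL : 0 ≤ L)
    (hx : |critVal α (v + x) - critVal α v| ≤ L * |x|) (y : ℝ) :
    |Phibar (critVal α (v + x) + y) - α * Phibar (v + x + y)
        + (stdphi (critVal α v) - α * stdphi v) * y|
      ≤ (1 + α + L) * (|x| + |y|) ^ 2 := by
  refine (abs_Phibar_add_sub_mul_Phibar_add_le hα₀.le (Phibar_critVal hα₀ hα₁ (v + x)) y).trans
    ?_
  rw [add_sub_cancel_left, ← sq_abs y]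
  have hx' : (|critVal α (v + x) - critVal α v| + α * |x|) * |y| ≤ (L + α) * (|x| * |y|) := by
    nlinarith [abs_nonneg y]
  have hK : 0 ≤ 1 + α + L := by linarith
  nlinarith [mul_nonneg hK (sq_nonneg |x|), mul_nonneg hL (sq_nonneg |y|),
    mul_nonneg (by linarith : 0 ≤ 2 + α + L) (mul_nonneg (abs_nonneg x) (abs_nonneg y))]

lemma gaussianReal_one_Ioi (μ a : ℝ) :
    gaussianReal μ 1 (Ioi a) = ENNReal.ofReal (Phibar (a - μ)) := by
  have h : gaussianReal μ 1 = (gaussianReal 0 1).map (· + μ) := by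
    rw [gaussianReal_map_add_const, zero_add]
  rw [h, Measure.map_apply (measurable_add_const μ) measurableSet_Ioi, preimage_add_const_Ioi,
    gaussianReal_apply_eq_integral 0 one_ne_zero, ← stdphi_eq_gaussianPDFReal]
  rfl

lemma toReal_prod_gaussianReal_setOf_lt {X : Type*} [MeasurableSpace X] (ν : Measure X)
    [SFinite ν] (μ : ℝ) {c : X → ℝ} (hc : Measurable c) :
    ((ν.prod (gaussianReal μ 1)) {p | c p.1 < p.2}).toReal = ∫ u, Phibar (c u - μ) ∂ν := by
  have hmeas : MeasurableSet {p : X × ℝ | c p.1 < p.2} :=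
    measurableSet_lt (hc.comp measurable_fst) measurable_snd
  rw [Measure.prod_apply hmeas,
    integral_eq_lintegral_of_nonneg_ae (ae_of_all _ fun u => (Phibar_pos _).le)
      (continuous_Phibar.measurable.comp (hc.sub_const μ)).aestronglyMeasurable]
  congr 1
  refine lintegral_congr fun u => ?_
  rw [← gaussianReal_one_Ioi]
  rfl

lemma abs_integral_le_of_abs_add_mul_sub_integral_le {X : Type*} [MeasurableSpace X]
    {ν : Measure X} [IsProbabilityMeasure ν] {f g : X → ℝ} (hf : Integrable f ν)
    (hg : Integrable g ν) {c K : ℝ} (h : ∀ u, |f u + c * (∫ w, g w ∂ν - g u)| ≤ K) :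
    |∫ u, f u ∂ν| ≤ K := by
  have hcentered : ∫ u, c * (∫ w, g w ∂ν - g u) ∂ν = 0 := by
    rw [integral_const_mul, integral_sub (integrable_const _) hg]
    simp
  have hint : Integrable (fun u => c * (∫ w, g w ∂ν - g u)) ν :=
    ((integrable_const _).sub hg).const_mul c
  have := norm_integral_le_of_norm_le_const
    (ae_of_all ν fun u => (Real.norm_eq_abs _).trans_le (h u))
  rwa [integral_add hf hint, hcentered, add_zero, Real.norm_eq_abs,
    probReal_univ, mul_one] at this

lemma integrable_Phibar_comp {X : Type*} [MeasurableSpace X] {ν : Measure X} [IsFiniteMeasure ν]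
    {c : X → ℝ} (hc : Measurable c) : Integrable (fun u => Phibar (c u)) ν :=
  .of_bound (continuous_Phibar.measurable.comp hc).aestronglyMeasurable 1
    (ae_of_all _ fun u => by
      rw [Real.norm_eq_abs, abs_of_pos (Phibar_pos _)]
      exact (Phibar_lt_one _).le)

lemma toReal_rejection_sub_selection_eq_integral {X : Type*} [MeasurableSpace X]
    (ν : Measure X) [IsProbabilityMeasure ν] {vs α : ℝ} (hα₀ : 0 < α) (hα₁ : α ≤ 1)
    {g s : X → ℝ} (hg : Measurable g) (hs : Measurable s) :
    ((ν.prod (gaussianReal (-∫ u, g u ∂ν) 1))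
          {p | Phibar (p.2 + g p.1) / Phibar (vs - s p.1 + g p.1) < α}).toReal
        - α * ((ν.prod (gaussianReal (-∫ u, g u ∂ν) 1)) {p | vs - s p.1 < p.2}).toReal
      = ∫ u, (Phibar (critVal α (vs + (g u - s u)) + (∫ w, g w ∂ν - g u))
          - α * Phibar (vs + (g u - s u) + (∫ w, g w ∂ν - g u))) ∂ν := by
  set h := ∫ u, g u ∂ν
  have hrej : {p : X × ℝ | Phibar (p.2 + g p.1) / Phibar (vs - s p.1 + g p.1) < α}
      = {p | critVal α (vs + (g p.1 - s p.1)) - g p.1 < p.2} := by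
    ext p
    have : vs - s p.1 + g p.1 = vs + (g p.1 - s p.1) := by ring
    exact (Phibar_div_Phibar_lt_iff hα₀ hα₁).trans (by rw [this]; exact sub_lt_iff_lt_add.symm)
  have hrej_meas : Measurable fun u => critVal α (vs + (g u - s u)) - g u :=
    ((monotone_critVal hα₀ hα₁).measurable.comp ((hg.sub hs).const_add vs)).sub hg
  have hsel_meas : Measurable fun u => vs - s u := hs.const_sub vs
  rw [hrej, toReal_prod_gaussianReal_setOf_lt ν _ hrej_meas,
    toReal_prod_gaussianReal_setOf_lt ν _ hsel_meas, ← integral_const_mul,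
    ← integral_sub (integrable_Phibar_comp (hrej_meas.sub_const _))
      ((integrable_Phibar_comp (hsel_meas.sub_const _)).const_mul α)]
  congr 1 with u
  rw [show critVal α (vs + (g u - s u)) - g u - -h = critVal α (vs + (g u - s u)) + (h - g u) by
      ring, show vs - s u - -h = vs + (g u - s u) + (h - g u) by ring]

lemma abs_rejection_sub_selection_le {X : Type*} [MeasurableSpace X] (ν : Measure X)
    [IsProbabilityMeasure ν] {vs α L : ℝ} (hα₀ : 0 < α) (hα₁ : α ≤ 1) (hL₀ : 0 ≤ L)
    (hL : ∀ x, |x| ≤ 1 → |critVal α (vs + x) - critVal α vs| ≤ L * |x|)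
    {g s : X → ℝ} (hg : Measurable g) (hs : Measurable s) {εg εs : ℝ}
    (hgε : ∀ u, |g u| ≤ εg) (hsε : ∀ u, |s u| ≤ εs) (hε : εg + εs ≤ 1) :
    |((ν.prod (gaussianReal (-∫ u, g u ∂ν) 1))
          {p | Phibar (p.2 + g p.1) / Phibar (vs - s p.1 + g p.1) < α}).toReal
        - α * ((ν.prod (gaussianReal (-∫ u, g u ∂ν) 1)) {p | vs - s p.1 < p.2}).toReal|
      ≤ 9 * (1 + α + L) * (εg + εs) ^ 2 := by
  have hgε' : ∀ u, ‖g u‖ ≤ εg := fun u => (Real.norm_eq_abs _).trans_le (hgε u)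
  have hh : |∫ u, g u ∂ν| ≤ εg := by
    simpa using norm_integral_le_of_norm_le_const (μ := ν) (ae_of_all _ hgε')
  have hx_meas : Measurable fun u => g u - s u := hg.sub hs
  have hmeas : Measurable fun u => critVal α (vs + (g u - s u)) :=
    (monotone_critVal hα₀ hα₁).measurable.comp (hx_meas.const_add vs)
  rw [toReal_rejection_sub_selection_eq_integral ν hα₀ hα₁ hg hs]
  refine abs_integral_le_of_abs_add_mul_sub_integral_le
    ((integrable_Phibar_comp (hmeas.add (hg.const_sub _))).sub
      ((integrable_Phibar_comp ((hx_meas.const_add vs).add (hg.const_sub _))).const_mul α))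
    (.of_bound hg.aestronglyMeasurable εg (ae_of_all _ hgε'))
    (c := stdphi (critVal α vs) - α * stdphi vs) fun u => ?_
  have hx : |g u - s u| ≤ εg + εs := (abs_sub _ _).trans (add_le_add (hgε u) (hsε u))
  have hy : |∫ w, g w ∂ν - g u| ≤ 2 * (εg + εs) := by
    linarith [abs_sub (∫ w, g w ∂ν) (g u), hgε u, abs_nonneg (s u), hsε u]
  refine (abs_Phibar_critVal_add_sub_le hα₀ hα₁ hL₀ (hL _ (hx.trans hε)) _).trans ?_
  calc (1 + α + L) * (|g u - s u| + |∫ w, g w ∂ν - g u|) ^ 2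
      ≤ (1 + α + L) * (3 * (εg + εs)) ^ 2 := by
        gcongr
        linarith
    _ = 9 * (1 + α + L) * (εg + εs) ^ 2 := by ring

instance isProbabilityMeasure_gaussianPi {m : ℕ} (μ : Fin m → ℝ) (v : ℝ≥0) :
    IsProbabilityMeasure (gaussianPi μ v) := by
  unfold gaussianPi
  infer_instance

theorem stmt_12_general (m : ℕ) (vs α : ℝ) (hα : α ∈ Set.Ioo (0 : ℝ) 1) :
    ∃ K : ℝ, 0 < K ∧
      ∀ g s : (Fin m → ℝ) → ℝ, Measurable g → Measurable s →
        BddAbove (Set.range fun x => |g x|) →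
        BddAbove (Set.range fun x => |s x|) →
        (⨆ x, |g x|) + (⨆ x, |s x|) ≤ 1 →
        ∀ θ : Fin m → ℝ,
          |(((gaussianPi θ 1).prod
                (gaussianReal (-(∫ x, g x ∂(gaussianPi θ 1))) 1))
              {p : (Fin m → ℝ) × ℝ |
                Phibar (p.2 + g p.1) / Phibar (vs - s p.1 + g p.1) < α}).toReal
            - α * (((gaussianPi θ 1).prod
                (gaussianReal (-(∫ x, g x ∂(gaussianPi θ 1))) 1))
              {p : (Fin m → ℝ) × ℝ | vs - s p.1 < p.2}).toReal|
          ≤ K * ((⨆ x, |g x|) + ⨆ x, |s x|) ^ 2 := by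
  obtain ⟨L, hL₀, hL⟩ := exists_abs_critVal_add_sub_le hα.1 hα.2.le vs
  refine ⟨9 * (1 + α + L), by linarith [hα.1], ?_⟩
  intro g s hg hs hgb hsb hε θ
  exact abs_rejection_sub_selection_le (gaussianPi θ 1) hα.1 hα.2.le hL₀ hL hg hs
    (le_ciSup hgb) (le_ciSup hsb) hε

/-- Theorem 4 (approximately unbiased selective p-value in the theory of nearly flat
surfaces): with `h = E₁ g` and the selective p-value
`p(u,v) = Φ̄(v + g(u))/Φ̄(v_s − s(u) + g(u))`, the test rejecting when `p(Y) < α`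
has, along the boundary of the hypothesis region, rejection probability equal to
`α` times the selection probability of `S`, up to an error quadratic in
`‖g‖_∞ + ‖s‖_∞`. -/
theorem stmt_12 (m : ℕ) (vs α : ℝ) (hα : α ∈ Set.Ioo (0 : ℝ) 1)
    (vr : ℝ) (hvr : Phibar vr = α * Phibar vs) :
    ∃ K : ℝ, 0 < K ∧
      ∀ g s : (Fin m → ℝ) → ℝ, Measurable g → Measurable s →
        BddAbove (Set.range fun x => |g x|) →
        BddAbove (Set.range fun x => |s x|) →
        (⨆ x, |g x|) + (⨆ x, |s x|) ≤ 1 →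
        ∀ θ : Fin m → ℝ,
          |(((gaussianPi θ 1).prod
                (gaussianReal (-(∫ x, g x ∂(gaussianPi θ 1))) 1))
              {p : (Fin m → ℝ) × ℝ |
                Phibar (p.2 + g p.1) / Phibar (vs - s p.1 + g p.1) < α}).toReal
            - α * (((gaussianPi θ 1).prod
                (gaussianReal (-(∫ x, g x ∂(gaussianPi θ 1))) 1))
              {p : (Fin m → ℝ) × ℝ | vs - s p.1 < p.2}).toReal|
          ≤ K * ((⨆ x, |g x|) + ⨆ x, |s x|) ^ 2 :=
  stmt_12_general m vs α hα
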